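/- arXiv:2406.13566 — 2 statements merged into one kernel-verified Lean document; each statement's English description precedes it below -/
import Mathlib

section
/- Let δ ∈ (0,1) and let B and G be symmetric real d×d matrices. Then (G − B) : g_δ′(B) ≥ trace(g_δ(G) − g_δ(B)), where the colon denotes the Frobenius inner product. -/
/-! Klein's inequality. Since `g_δ` is concave with derivative `g_δ'`, the tangent-line bound
`g_δ x - g_δ b ≤ (x - b) g_δ'(b)` holds for all reals. Expanding both sides of the matrix
inequality in eigenbases `(uᵢ)` of `B` and `(vⱼ)` of `G` turns them into sums over pairs of
eigenvalues `(bᵢ, gⱼ)` weighted by `⟨uᵢ, vⱼ⟩²`; these weights form a doubly stochastic matrix,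
so the scalar bound applies term by term. -/

open Matrix

/-- The Frobenius inner product of two real matrices. -/
noncomputable def frobInner {d : ℕ} (A C : Matrix (Fin d) (Fin d) ℝ) : ℝ :=
  ∑ i, ∑ j, A i j * C i j

/-- The matrix obtained by applying a scalar function `F : ℝ → ℝ` to the spectrum of a
symmetric (Hermitian) real matrix `B`. -/
noncomputable def specApply {d : ℕ} (F : ℝ → ℝ) {B : Matrix (Fin d) (Fin d) ℝ}
    (hB : B.IsHermitian) : Matrix (Fin d) (Fin d) ℝ :=
  (hB.eigenvectorUnitary : Matrix (Fin d) (Fin d) ℝ) *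
    Matrix.diagonal (fun i => F (hB.eigenvalues i)) *
    star (hB.eigenvectorUnitary : Matrix (Fin d) (Fin d) ℝ)

/-- The regularised logarithm `g_δ`. -/
noncomputable def gReg (δ : ℝ) (s : ℝ) : ℝ :=
  if s < δ then s / δ + Real.log δ - 1 else Real.log s

lemma Real.log_le_log_add_sub_div {b y : ℝ} (hb : 0 < b) (hy : 0 < y) :
    Real.log y ≤ Real.log b + (y - b) / b := by
  have := Real.log_le_sub_one_of_pos (div_pos hy hb)
  rw [Real.log_div hy.ne' hb.ne'] at this
  rw [sub_div, div_self hb.ne']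
  linarith

namespace gReg

variable {δ : ℝ}

lemma of_lt {s : ℝ} (hs : s < δ) : gReg δ s = s / δ + Real.log δ - 1 := if_pos hs

lemma of_le {s : ℝ} (hs : δ ≤ s) : gReg δ s = Real.log s := if_neg (not_lt.mpr hs)

lemma le_div_add_log_sub_one (hδ : 0 < δ) (x : ℝ) : gReg δ x ≤ x / δ + Real.log δ - 1 := by
  rcases lt_or_ge x δ with hx | hx
  · rw [of_lt hx]
  · have := Real.log_le_log_add_sub_div hδ (hδ.trans_le hx)
    rw [sub_div, div_self hδ.ne'] at this
    rw [of_le hx]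
    linarith

lemma le_log_add_sub_div (hδ : 0 < δ) {b : ℝ} (hb : δ ≤ b) (x : ℝ) :
    gReg δ x ≤ Real.log b + (x - b) / b := by
  have hb0 : 0 < b := hδ.trans_le hb
  rcases lt_or_ge x δ with hx | hx
  · have hδb := Real.log_le_log_add_sub_div hb0 hδ
    have : x / δ - x / b ≤ 1 - δ / b := by
      rw [div_sub_div _ _ hδ.ne' hb0.ne', div_le_iff₀ (mul_pos hδ hb0)]
      field_simp
      nlinarith
    rw [sub_div, div_self hb0.ne'] at hδb ⊢
    rw [of_lt hx]
    linarith
  · rw [of_le hx]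
    exact Real.log_le_log_add_sub_div hb0 (hδ.trans_le hx)

lemma sub_le_mul_deriv (hδ : 0 < δ) (b x : ℝ) :
    gReg δ x - gReg δ b ≤ (x - b) * (1 / max b δ) := by
  rcases lt_or_ge b δ with hb | hb
  · have := le_div_add_log_sub_one hδ x
    rw [max_eq_right hb.le, of_lt hb, mul_one_div, sub_div]
    linarith
  · have := le_log_add_sub_div hδ hb x
    rw [max_eq_left hb, of_le hb, mul_one_div]
    linarith

end gReg

lemma sq_entries_mem_doublyStochastic {n : Type*} [Fintype n] [DecidableEq n]
    {W : Matrix n n ℝ} (hW : W ∈ orthogonalGroup n ℝ) :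
    of (fun i j => W i j ^ 2) ∈ doublyStochastic ℝ n := by
  have hrow := congr_fun₂ ((mem_orthogonalGroup_iff n ℝ).mp hW)
  have hcol := congr_fun₂ ((mem_orthogonalGroup_iff' n ℝ).mp hW)
  refine (mem_doublyStochastic_iff_sum).2 ⟨fun i j => sq_nonneg _, fun i => ?_, fun j => ?_⟩
  · simpa [mul_apply, sq] using hrow i i
  · simpa [mul_apply, sq] using hcol j j

lemma sum_sub_sum_le_of_mem_doublyStochastic {n : Type*} [Fintype n] [DecidableEq n]
    {f f' : ℝ → ℝ} (hf : ∀ b x, f x - f b ≤ (x - b) * f' b) {P : Matrix n n ℝ}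
    (hP : P ∈ doublyStochastic ℝ n) (b g : n → ℝ) :
    ∑ j, f (g j) - ∑ i, f (b i) ≤
      ∑ i, ∑ j, P i j * f' (b i) * g j - ∑ i, f' (b i) * b i := by
  have row (x : n → ℝ) : ∑ i, x i = ∑ i, ∑ j, P i j * x i := by
    simp_rw [← Finset.sum_mul, sum_row_of_mem_doublyStochastic hP, one_mul]
  have col (y : n → ℝ) : ∑ j, y j = ∑ i, ∑ j, P i j * y j := by
    rw [Finset.sum_comm]
    simp_rw [← Finset.sum_mul, sum_col_of_mem_doublyStochastic hP, one_mul]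
  rw [col fun j => f (g j), row fun i => f (b i), row fun i => f' (b i) * b i]
  simp_rw [← Finset.sum_sub_distrib]
  refine Finset.sum_le_sum fun i _ => Finset.sum_le_sum fun j _ => ?_
  have := mul_le_mul_of_nonneg_left (hf (b i) (g j))
    (nonneg_of_mem_doublyStochastic hP (i := i) (j := j))
  linarith

section Frobenius

variable {d : ℕ}

lemma frobInner_comm (A C : Matrix (Fin d) (Fin d) ℝ) : frobInner A C = frobInner C A := by
  simp only [frobInner, mul_comm]

lemma frobInner_sub_left (A A' C : Matrix (Fin d) (Fin d) ℝ) :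
    frobInner (A - A') C = frobInner A C - frobInner A' C := by
  simp only [frobInner, Matrix.sub_apply, sub_mul, Finset.sum_sub_distrib]

lemma frobInner_eq_trace_transpose_mul (A C : Matrix (Fin d) (Fin d) ℝ) :
    frobInner A C = (Aᵀ * C).trace := by
  simp only [frobInner, trace, diag, mul_apply, transpose_apply]
  exact Finset.sum_comm

lemma trace_diagonal_mul_mul_diagonal_mul_transpose (W : Matrix (Fin d) (Fin d) ℝ)
    (a c : Fin d → ℝ) :
    (diagonal a * W * diagonal c * Wᵀ).trace = ∑ i, ∑ j, W i j ^ 2 * a i * c j := by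
  have h : diagonal a * W * diagonal c = of fun i j => a i * W i j * c j := by
    ext i j
    simp only [mul_diagonal, diagonal_mul, of_apply]
  simp only [h, trace, diag, mul_apply, of_apply, transpose_apply]
  refine Finset.sum_congr rfl fun i _ => Finset.sum_congr rfl fun j _ => by ring

lemma frobInner_conj_diagonal (U V : Matrix (Fin d) (Fin d) ℝ) (a c : Fin d → ℝ) :
    frobInner (U * diagonal a * Uᵀ) (V * diagonal c * Vᵀ) =
      ∑ i, ∑ j, (Uᵀ * V) i j ^ 2 * a i * c j := by
  rw [frobInner_eq_trace_transpose_mul, ← trace_diagonal_mul_mul_diagonal_mul_transpose]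
  simp only [transpose_mul, transpose_transpose, diagonal_transpose, Matrix.mul_assoc]
  rw [trace_mul_comm]
  simp only [Matrix.mul_assoc]

end Frobenius

section Spectral

variable {d : ℕ} {A B : Matrix (Fin d) (Fin d) ℝ}

lemma specApply_eq_mul_diagonal_mul_transpose (F : ℝ → ℝ) (hA : A.IsHermitian) :
    specApply F hA = (hA.eigenvectorUnitary : Matrix (Fin d) (Fin d) ℝ) *
      diagonal (F ∘ hA.eigenvalues) * (hA.eigenvectorUnitary : Matrix (Fin d) (Fin d) ℝ)ᵀ := by
  rw [specApply, star_eq_conjTranspose, conjTranspose_eq_transpose_of_trivial]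
  rfl

lemma specApply_id (hA : A.IsHermitian) : specApply id hA = A := by
  conv_rhs => rw [hA.spectral_theorem]
  simp [specApply, RCLike.ofReal_real_eq_id]

lemma trace_specApply (F : ℝ → ℝ) (hA : A.IsHermitian) :
    (specApply F hA).trace = ∑ i, F (hA.eigenvalues i) := by
  rw [specApply, trace_mul_cycle, Unitary.coe_star_mul_self, one_mul, trace_diagonal]

noncomputable def eigenOverlap (hA : A.IsHermitian) (hB : B.IsHermitian) :
    Matrix (Fin d) (Fin d) ℝ :=
  of fun i j => ((hA.eigenvectorUnitary : Matrix (Fin d) (Fin d) ℝ)ᵀ *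
    (hB.eigenvectorUnitary : Matrix (Fin d) (Fin d) ℝ)) i j ^ 2

lemma eigenOverlap_mem_doublyStochastic (hA : A.IsHermitian) (hB : B.IsHermitian) :
    eigenOverlap hA hB ∈ doublyStochastic ℝ (Fin d) := by
  apply sq_entries_mem_doublyStochastic
  convert (star hA.eigenvectorUnitary * hB.eigenvectorUnitary).prop
  rw [Submonoid.coe_mul, Unitary.coe_star, star_eq_conjTranspose,
    conjTranspose_eq_transpose_of_trivial]

lemma eigenOverlap_self (hA : A.IsHermitian) : eigenOverlap hA hA = 1 := by
  have h := Unitary.coe_star_mul_self hA.eigenvectorUnitary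
  rw [star_eq_conjTranspose, conjTranspose_eq_transpose_of_trivial] at h
  ext i j
  rw [eigenOverlap, of_apply, h, one_apply]
  split_ifs <;> norm_num

lemma frobInner_specApply (F H : ℝ → ℝ) (hA : A.IsHermitian) (hB : B.IsHermitian) :
    frobInner (specApply F hA) (specApply H hB) =
      ∑ i, ∑ j, eigenOverlap hA hB i j * F (hA.eigenvalues i) * H (hB.eigenvalues j) := by
  simp only [specApply_eq_mul_diagonal_mul_transpose, frobInner_conj_diagonal]
  rfl

lemma frobInner_specApply_self (F H : ℝ → ℝ) (hA : A.IsHermitian) :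
    frobInner (specApply F hA) (specApply H hA) =
      ∑ i, F (hA.eigenvalues i) * H (hA.eigenvalues i) := by
  simp [frobInner_specApply, eigenOverlap_self, Matrix.one_apply]

end Spectral

theorem trace_specApply_sub_le_frobInner {d : ℕ} {f f' : ℝ → ℝ}
    (hf : ∀ b x, f x - f b ≤ (x - b) * f' b) {B G : Matrix (Fin d) (Fin d) ℝ}
    (hB : B.IsHermitian) (hG : G.IsHermitian) :
    (specApply f hG - specApply f hB).trace ≤ frobInner (G - B) (specApply f' hB) := by
  have inner_G : frobInner G (specApply f' hB) = ∑ i, ∑ j,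
      eigenOverlap hB hG i j * f' (hB.eigenvalues i) * hG.eigenvalues j :=
    calc frobInner G (specApply f' hB) = frobInner (specApply f' hB) (specApply id hG) := by
          rw [specApply_id, frobInner_comm]
      _ = _ := frobInner_specApply f' id hB hG
  have inner_B : frobInner B (specApply f' hB) = ∑ i, f' (hB.eigenvalues i) * hB.eigenvalues i :=
    calc frobInner B (specApply f' hB) = frobInner (specApply f' hB) (specApply id hB) := by
          rw [specApply_id, frobInner_comm]
      _ = _ := frobInner_specApply_self f' id hB
  rw [trace_sub, trace_specApply, trace_specApply, frobInner_sub_left, inner_G, inner_B]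
  exact sum_sub_sum_le_of_mem_doublyStochastic hf (eigenOverlap_mem_doublyStochastic hB hG) _ _

theorem frobInner_gReg_deriv_ge_trace_general {d : ℕ} (δ : ℝ) (hδ : δ ∈ Set.Ioo (0:ℝ) 1)
    (B G : Matrix (Fin d) (Fin d) ℝ) (hB : B.IsHermitian) (hG : G.IsHermitian) :
    (specApply (gReg δ) hG - specApply (gReg δ) hB).trace ≤
      frobInner (G - B) (specApply (fun s => 1 / max s δ) hB) :=
  trace_specApply_sub_le_frobInner (gReg.sub_le_mul_deriv hδ.1) hB hG

/-- For `δ ∈ (0,1)` and symmetric real `d × d` matrices `B` and `G`,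
`(G - B) : g_δ'(B) ≥ trace (g_δ(G) - g_δ(B))`, where `g_δ'(s) = 1 / max s δ` and `:` denotes
the Frobenius inner product. -/
theorem frobInner_gReg_deriv_ge_trace {d : ℕ} (hd : 0 < d) (δ : ℝ) (hδ : δ ∈ Set.Ioo (0:ℝ) 1)
    (B G : Matrix (Fin d) (Fin d) ℝ) (hB : B.IsHermitian) (hG : G.IsHermitian) :
    (specApply (gReg δ) hG - specApply (gReg δ) hB).trace ≤
      frobInner (G - B) (specApply (fun s => 1 / max s δ) hB) :=
  frobInner_gReg_deriv_ge_trace_general δ hδ B G hB hG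
end

section
/- Let B₀ and B₁ be positive definite symmetric real d×d matrices. Then (B₁ − B₀) : (B₀⁻¹ − B₁⁻¹) ≥ 0, with equality if and only if B₀ = B₁. -/
/-!
Since `B₀⁻¹ - B₁⁻¹ = B₀⁻¹ (B₁ - B₀) B₁⁻¹`, the pairing is `tr (Dᴴ B₀⁻¹ D B₁⁻¹)` with
`D = B₁ - B₀`. Factoring `B₀⁻¹ = Rᴴ R` and `B₁⁻¹ = Sᴴ S` with `R`, `S` invertible and using
cyclicity of the trace, it is the squared Frobenius norm of `R D Sᴴ`, which vanishes only when
`D = 0`.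
-/

open Matrix

namespace Matrix

variable {𝕜 n : Type*} [RCLike 𝕜] [Fintype n]

open scoped ComplexOrder MatrixOrder

lemma trace_conjTranspose_mul_star_mul_self_mul_mul_star_mul_self (D R S : Matrix n n 𝕜) :
    (Dᴴ * (star R * R) * D * (star S * S)).trace = ((R * D * Sᴴ)ᴴ * (R * D * Sᴴ)).trace := by
  have h : Dᴴ * (star R * R) * D * (star S * S) = (Dᴴ * Rᴴ * R * D * Sᴴ) * S := by
    simp only [star_eq_conjTranspose, Matrix.mul_assoc]
  rw [h, trace_mul_comm]
  simp only [conjTranspose_mul, conjTranspose_conjTranspose, Matrix.mul_assoc]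

lemma PosSemidef.trace_conjTranspose_mul_mul_mul_nonneg {A C : Matrix n n 𝕜} (hA : A.PosSemidef)
    (hC : C.PosSemidef) (D : Matrix n n 𝕜) : 0 ≤ (Dᴴ * A * D * C).trace := by
  classical
  obtain ⟨R, rfl⟩ := CStarAlgebra.nonneg_iff_eq_star_mul_self.mp hA.nonneg
  obtain ⟨S, rfl⟩ := CStarAlgebra.nonneg_iff_eq_star_mul_self.mp hC.nonneg
  rw [trace_conjTranspose_mul_star_mul_self_mul_mul_star_mul_self]
  exact (posSemidef_conjTranspose_mul_self _).trace_nonneg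

lemma PosDef.trace_conjTranspose_mul_mul_mul_eq_zero_iff {A C : Matrix n n 𝕜} (hA : A.PosDef)
    (hC : C.PosDef) {D : Matrix n n 𝕜} : (Dᴴ * A * D * C).trace = 0 ↔ D = 0 := by
  classical
  obtain ⟨R, hR, rfl⟩ :=
    CStarAlgebra.isStrictlyPositive_iff_eq_star_mul_self.mp hA.isStrictlyPositive
  obtain ⟨S, hS, rfl⟩ :=
    CStarAlgebra.isStrictlyPositive_iff_eq_star_mul_self.mp hC.isStrictlyPositive
  rw [trace_conjTranspose_mul_star_mul_self_mul_mul_star_mul_self,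
    trace_conjTranspose_mul_self_eq_zero_iff, ← star_eq_conjTranspose,
    hS.star.mul_left_eq_zero, hR.mul_right_eq_zero]

end Matrix

lemma frobInner_eq_trace {d : ℕ} (A C : Matrix (Fin d) (Fin d) ℝ) :
    frobInner A C = (Aᴴ * C).trace := by
  simp only [frobInner, trace, diag, mul_apply, conjTranspose_apply, star_trivial]
  exact Finset.sum_comm

theorem frobInner_sub_inv_sub_nonneg_general {d : ℕ} (B₀ B₁ : Matrix (Fin d) (Fin d) ℝ)
    (h₀ : B₀.PosDef) (h₁ : B₁.PosDef) :
    0 ≤ frobInner (B₁ - B₀) (B₀⁻¹ - B₁⁻¹) ∧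
      (frobInner (B₁ - B₀) (B₀⁻¹ - B₁⁻¹) = 0 ↔ B₀ = B₁) := by
  have hinner : frobInner (B₁ - B₀) (B₀⁻¹ - B₁⁻¹) =
      ((B₁ - B₀)ᴴ * B₀⁻¹ * (B₁ - B₀) * B₁⁻¹).trace := by
    rw [frobInner_eq_trace, inv_sub_inv (iff_of_true h₀.isUnit h₁.isUnit), Matrix.mul_assoc,
      Matrix.mul_assoc, Matrix.mul_assoc]
  rw [hinner, h₀.inv.trace_conjTranspose_mul_mul_mul_eq_zero_iff h₁.inv, sub_eq_zero, eq_comm]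
  exact ⟨h₀.inv.posSemidef.trace_conjTranspose_mul_mul_mul_nonneg h₁.inv.posSemidef _, Iff.rfl⟩

/-- For positive definite symmetric real `d × d` matrices `B₀`, `B₁`,
`(B₁ - B₀) : (B₀⁻¹ - B₁⁻¹) ≥ 0`, with equality iff `B₀ = B₁`. -/
theorem frobInner_sub_inv_sub_nonneg {d : ℕ} (hd : 0 < d) (B₀ B₁ : Matrix (Fin d) (Fin d) ℝ)
    (h₀ : B₀.PosDef) (h₁ : B₁.PosDef) :
    0 ≤ frobInner (B₁ - B₀) (B₀⁻¹ - B₁⁻¹) ∧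
      (frobInner (B₁ - B₀) (B₀⁻¹ - B₁⁻¹) = 0 ↔ B₀ = B₁) :=
  frobInner_sub_inv_sub_nonneg_general B₀ B₁ h₀ h₁
end
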